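/- Let R be an infinite commutative ring with nonzero identity and let n ≥ 2. Then TD(R,n) has an infinite independent set; in particular the independence number of TD(R,n) is infinite. -/

import Mathlib

open SimpleGraph

/-- The total dot product graph `TD(R,n)`: vertices are the nonzero vectors of `R^n`,
and two distinct vertices are adjacent iff their dot product is `0`. -/
def TD (R : Type*) [CommRing R] (n : ℕ) :
    SimpleGraph {x : Fin n → R // x ≠ 0} where
  Adj a b := a ≠ b ∧ ∑ i, a.1 i * b.1 i = 0
  symm := by
    refine ⟨?_⟩
    intro a b ⟨hne, h⟩
    exact ⟨hne.symm, by simpa [mul_comm] using h⟩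
  loopless := by
    refine ⟨?_⟩
    intro a ⟨hne, _⟩
    exact hne rfl

/-!
The vectors `(1, r, 0, …, 0)` have dot products `1 + r s`, which vanish only when `s = -r⁻¹`.
So each such vector is adjacent to at most one other, and in an infinite graph whose vertices
all have finitely many neighbours a greedy choice produces an infinite independent set.
-/

theorem SimpleGraph.exists_infinite_isIndepSet {V : Type*} [Infinite V] (G : SimpleGraph V)
    (hG : ∀ v, (G.neighborSet v).Finite) : ∃ s : Set V, s.Infinite ∧ G.IsIndepSet s := by
  obtain ⟨f, -, hf⟩ := exists_seq_of_forall_finset_exists (fun _ => True)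
    (fun v w => v ≠ w ∧ ¬G.Adj v w) fun s _ => by
      have hfin : ((s : Set V) ∪ ⋃ v ∈ s, G.neighborSet v).Finite :=
        s.finite_toSet.union (s.finite_toSet.biUnion fun v _ => hG v)
      obtain ⟨w, hw⟩ := hfin.exists_notMem
      simp only [Set.mem_union, Set.mem_iUnion, mem_neighborSet, not_or, not_exists] at hw
      exact ⟨w, trivial, fun v hv => ⟨fun h => hw.1 (h ▸ hv), hw.2 v hv⟩⟩
  have hf_inj : Function.Injective f := fun m n hmn => by
    by_contra hne
    rcases Ne.lt_or_gt hne with h | h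
    exacts [(hf m n h).1 hmn, (hf n m h).1 hmn.symm]
  refine ⟨Set.range f, Set.infinite_range_of_injective hf_inj, ?_⟩
  rintro _ ⟨m, rfl⟩ _ ⟨n, rfl⟩ hne
  rcases (ne_of_apply_ne f hne).lt_or_gt with h | h
  exacts [(hf m n h).2, fun hadj => (hf n m h).2 hadj.symm]

theorem subsingleton_setOf_mul_eq_neg_one {R : Type*} [CommRing R] (r : R) :
    {s : R | r * s = -1}.Subsingleton := fun s (hs : r * s = -1) t (ht : r * t = -1) => by
  linear_combination s * ht - t * hs

section LineVertex

variable (R : Type*) [CommRing R] [Nontrivial R] (m : ℕ)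

def lineVertex (r : R) : {x : Fin (m + 2) → R // x ≠ 0} :=
  ⟨Fin.cons 1 (Fin.cons r 0), fun h => one_ne_zero (congrFun h 0)⟩

theorem lineVertex_injective : Function.Injective (lineVertex R m) := fun r s h => by
  simpa [lineVertex] using congrFun (congrArg Subtype.val h) 1

variable {R m}

theorem sum_lineVertex_mul_lineVertex (r s : R) :
    ∑ i, (lineVertex R m r).1 i * (lineVertex R m s).1 i = 1 + r * s := by
  simp [lineVertex, Fin.sum_univ_succ]

theorem finite_neighborSet_comap_lineVertex (r : R) :
    (((TD R (m + 2)).comap (lineVertex R m)).neighborSet r).Finite := by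
  refine (subsingleton_setOf_mul_eq_neg_one r).finite.subset fun s hs => ?_
  have hdot := hs.2
  rw [sum_lineVertex_mul_lineVertex] at hdot
  exact eq_neg_of_add_eq_zero_right hdot

end LineVertex

/-- if `R` is an infinite commutative ring with nonzero identity and `n ≥ 2`,
then `TD(R,n)` has an infinite independent set. -/
theorem stmt4 (R : Type*) [CommRing R] [Nontrivial R] [Infinite R]
    (n : ℕ) (hn : 2 ≤ n) :
    ∃ S : Set {x : Fin n → R // x ≠ 0}, S.Infinite ∧
      ∀ u ∈ S, ∀ v ∈ S, ¬ (TD R n).Adj u v := by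
  obtain ⟨m, rfl⟩ := Nat.exists_eq_add_of_le' hn
  obtain ⟨s, hs_inf, hs_indep⟩ :=
    ((TD R (m + 2)).comap (lineVertex R m)).exists_infinite_isIndepSet
      finite_neighborSet_comap_lineVertex
  refine ⟨lineVertex R m '' s, hs_inf.image (lineVertex_injective R m).injOn, ?_⟩
  rintro _ ⟨r, hr, rfl⟩ _ ⟨t, ht, rfl⟩ hadj
  exact hs_indep hr ht (ne_of_apply_ne _ hadj.ne) hadj
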